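/- Let Θ ∈ (0, π) and define for hyperbolic radii r_v, r_w > 0 the angle α_w^v by cot(α_w^v/2) = (coth r_v sinh r_w + cos Θ cosh r_w)/sin Θ. Then ∂α_w^v/∂u_v > 0, where u_v = ln tanh(r_v/2). -/

import Mathlib

/-- Hyperbolic angle `α_w^v = 2 arccot((coth a · sinh b + cos θ · cosh b)/sin θ)`,
written using `arccot x = π/2 − arctan x`; here `a = r_v`, `b = r_w`. -/
noncomputable def hypAngle (a b θ : ℝ) : ℝ :=
  Real.pi - 2 * Real.arctan
    ((Real.cosh a / Real.sinh a * Real.sinh b + Real.cos θ * Real.cosh b) / Real.sin θ)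

/-- The hyperbolic radius `r` with discrete conformal factor `u = ln tanh(r/2)`,
i.e. `r = 2 artanh(e^u) = ln((1+e^u)/(1−e^u))`, defined for `u < 0`. -/
noncomputable def radiusOfFactor (u : ℝ) : ℝ :=
  Real.log ((1 + Real.exp u) / (1 - Real.exp u))

lemma coth_radiusOfFactor {t : ℝ} (ht : t < 0) :
    Real.cosh (radiusOfFactor t) / Real.sinh (radiusOfFactor t) = Real.cosh t := by
  have he0 : 0 < Real.exp t := Real.exp_pos t
  have he1 : Real.exp t < 1 := Real.exp_lt_one_iff.mpr ht
  set e := Real.exp t with hedef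
  have h1e : (0:ℝ) < 1 - e := by linarith
  have hx : 0 < (1 + e) / (1 - e) := by positivity
  set x := (1 + e) / (1 - e) with hxdef
  rw [radiusOfFactor, ← hedef, ← hxdef, Real.cosh_log hx, Real.sinh_log hx, Real.cosh_eq,
    Real.exp_neg, ← hedef]
  have hxi : x⁻¹ = (1 - e) / (1 + e) := by rw [hxdef, inv_div]
  have hene : e ≠ 0 := ne_of_gt he0
  have h1e' : (1:ℝ) - e ≠ 0 := ne_of_gt h1e
  have h1e'' : (1:ℝ) + e ≠ 0 := by positivity
  rw [hxi, hxdef]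
  rw [div_eq_div_iff]
  · field_simp
    ring
  · rw [div_ne_zero_iff]
    refine ⟨?_, by norm_num⟩
    rw [div_sub_div _ _ h1e' h1e'']
    apply div_ne_zero
    · nlinarith
    · exact mul_ne_zero h1e' h1e''
  · norm_num

/-- In hyperbolic geometry, the angle `α_w^v` is strictly increasing in the
discrete conformal factor `u_v = ln tanh(r_v/2)`: `∂α_w^v/∂u_v > 0`. -/
theorem stmt14 (Θ rw : ℝ) (hΘ : Θ ∈ Set.Ioo 0 Real.pi) (hrw : 0 < rw)
    (u : ℝ) (hu : u < 0) :
    0 < deriv (fun t => hypAngle (radiusOfFactor t) rw Θ) u := by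
  obtain ⟨hΘ0, hΘπ⟩ := hΘ
  have hs : 0 < Real.sin Θ := Real.sin_pos_of_pos_of_lt_pi hΘ0 hΘπ
  set g : ℝ → ℝ := fun t => Real.pi - 2 * Real.arctan
    ((Real.cosh t * Real.sinh rw + Real.cos Θ * Real.cosh rw) / Real.sin Θ) with hg
  have heq : (fun t => hypAngle (radiusOfFactor t) rw Θ) =ᶠ[nhds u] g := by
    filter_upwards [Iio_mem_nhds hu] with t ht
    simp only [hypAngle, hg, coth_radiusOfFactor ht]
  rw [heq.deriv_eq]
  set X := (Real.cosh u * Real.sinh rw + Real.cos Θ * Real.cosh rw) / Real.sin Θ with hX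
  have hinner : HasDerivAt (fun t => (Real.cosh t * Real.sinh rw + Real.cos Θ * Real.cosh rw)
      / Real.sin Θ) (Real.sinh u * Real.sinh rw / Real.sin Θ) u := by
    have h1 : HasDerivAt Real.cosh (Real.sinh u) u := Real.hasDerivAt_cosh u
    have := ((h1.mul_const (Real.sinh rw)).add_const (Real.cos Θ * Real.cosh rw)).div_const
      (Real.sin Θ)
    exact this
  have harctan : HasDerivAt g (-(2 * ((1 / (1 + X ^ 2)) *
      (Real.sinh u * Real.sinh rw / Real.sin Θ)))) u := by
    have := ((Real.hasDerivAt_arctan X).comp u hinner).const_mul 2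
    have h2 := (hasDerivAt_const u Real.pi).sub this
    refine h2.congr_deriv ?_
    ring
  rw [harctan.deriv]
  have hsinh : Real.sinh u < 0 := by
    have := Real.sinh_pos_iff.mpr (neg_pos.mpr hu)
    rw [Real.sinh_neg] at this; linarith
  have hsinhrw : 0 < Real.sinh rw := Real.sinh_pos_iff.mpr hrw
  have hden : 0 < 1 + X ^ 2 := by positivity
  have : Real.sinh u * Real.sinh rw / Real.sin Θ < 0 := by
    apply div_neg_of_neg_of_pos _ hs
    exact mul_neg_of_neg_of_pos hsinh hsinhrw
  have h1 : 0 < 1 / (1 + X ^ 2) := by positivity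
  nlinarith
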